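/- Let G be a 2-connected graph in which x, y are adjacent vertices such that G − {x,y} has exactly 2 components, and suppose {x,y} is not an admissible 2-cut. Then G is isomorphic to K_4 minus an edge. -/

import Mathlib

open SimpleGraph

/-- `G` is a 2-sum of `G₁` and `G₂` with joins `j₁, j₂`.  Here `zᵢ` is a vertex of
`Gᵢ` of degree two with distinct neighbors `xᵢ, yᵢ`; the graphs `Gᵢ - zᵢ` (with the
edge `xᵢyᵢ` removed if present) are glued into `G` along `x₁ = x₂ = j₁` and
`y₁ = y₂ = j₂`, and the edge `j₁j₂` is present in `G` iff `xᵢyᵢ ∈ E(Gᵢ)` for some `i`. -/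
def IsTwoSumOf {V V₁ V₂ : Type*} (G : SimpleGraph V) (G₁ : SimpleGraph V₁)
    (G₂ : SimpleGraph V₂) (j₁ j₂ : V) : Prop :=
  ∃ (z₁ x₁ y₁ : V₁) (z₂ x₂ y₂ : V₂) (f₁ : V₁ → V) (f₂ : V₂ → V),
    x₁ ≠ y₁ ∧ x₂ ≠ y₂ ∧
    (∀ u, G₁.Adj z₁ u ↔ u = x₁ ∨ u = y₁) ∧
    (∀ u, G₂.Adj z₂ u ↔ u = x₂ ∨ u = y₂) ∧
    Set.InjOn f₁ {v | v ≠ z₁} ∧ Set.InjOn f₂ {v | v ≠ z₂} ∧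
    f₁ x₁ = j₁ ∧ f₁ y₁ = j₂ ∧ f₂ x₂ = j₁ ∧ f₂ y₂ = j₂ ∧
    (∀ v : V, v ∈ f₁ '' {u | u ≠ z₁} ∪ f₂ '' {u | u ≠ z₂}) ∧
    (f₁ '' {u | u ≠ z₁}) ∩ (f₂ '' {u | u ≠ z₂}) = {j₁, j₂} ∧
    (∀ u v, u ≠ z₁ → v ≠ z₁ → s(u, v) ≠ s(x₁, y₁) →
      (G.Adj (f₁ u) (f₁ v) ↔ G₁.Adj u v)) ∧
    (∀ u v, u ≠ z₂ → v ≠ z₂ → s(u, v) ≠ s(x₂, y₂) →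
      (G.Adj (f₂ u) (f₂ v) ↔ G₂.Adj u v)) ∧
    (G.Adj j₁ j₂ ↔ (G₁.Adj x₁ y₁ ∨ G₂.Adj x₂ y₂)) ∧
    (∀ a b, G.Adj a b →
      (a ∈ f₁ '' {u | u ≠ z₁} ∧ b ∈ f₁ '' {u | u ≠ z₁}) ∨
      (a ∈ f₂ '' {u | u ≠ z₂} ∧ b ∈ f₂ '' {u | u ≠ z₂}))

/-- `{x, y}` is an admissible 2-cut of `G`: `G` can be expressed as a 2-sum of two
graphs, each having fewer edges than `G`, with `{x, y}` the set of joins. -/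
def AdmissibleTwoCut {V : Type*} (G : SimpleGraph V) (x y : V) : Prop :=
  ∃ (n₁ n₂ : ℕ) (G₁ : SimpleGraph (Fin n₁)) (G₂ : SimpleGraph (Fin n₂)),
    IsTwoSumOf G G₁ G₂ x y ∧
    G₁.edgeSet.ncard < G.edgeSet.ncard ∧ G₂.edgeSet.ncard < G.edgeSet.ncard

/-- `G` is 2-connected: at least 3 vertices, and deleting any single vertex
leaves a connected graph. -/
def TwoConnected {V : Type*} [Fintype V] (G : SimpleGraph V) : Prop :=
  3 ≤ Fintype.card V ∧ ∀ v : V, (G.induce {u | u ≠ v}).Connected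

/-!
Let `A` and `B` be the two components of `G - {x, y}`; since `G - x` and `G - y` are connected,
each of `x`, `y` has a neighbour in `A` and in `B`. Let `E_A` be the edges of `G` inside
`A ∪ {x, y}` and `E_B` those of `G - xy` inside `B ∪ {x, y}`, so `|E(G)| = |E_A| + |E_B|`.
Adding to each side a new vertex joined to `x` and `y` exhibits `G` as a 2-sum with joins
`x, y` of two graphs with `|E_A| + 2` and `|E_B| + 2` edges. Now `E_A` contains `xy` and an
edge from each of `x`, `y` into `A`, and `E_B` an edge from each of `x`, `y` into `B`; so an
edge inside `B` (or, exchanging the roles of `A` and `B`, inside `A`) would make `{x, y}`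
admissible. Hence `G - {x, y}` has no edges, `A = {a}`, `B = {b}`, and `G` is `K₄` minus `ab`.
-/

section TwoSum

variable {V V₁ V₂ W₁ : Type*} {G : SimpleGraph V} {G₁ : SimpleGraph V₁} {G₂ : SimpleGraph V₂}
  {j₁ j₂ : V}

lemma IsTwoSumOf.symm (h : IsTwoSumOf G G₁ G₂ j₁ j₂) : IsTwoSumOf G G₂ G₁ j₁ j₂ := by
  obtain ⟨z₁, x₁, y₁, z₂, x₂, y₂, f₁, f₂, h1, h2, h3, h4, h5, h6, h7, h8, h9, h10,
    h11, h12, h13, h14, h15, h16⟩ := h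
  exact ⟨z₂, x₂, y₂, z₁, x₁, y₁, f₂, f₁, h2, h1, h4, h3, h6, h5, h9, h10, h7, h8,
    fun v => Set.union_comm _ _ ▸ h11 v, Set.inter_comm _ _ ▸ h12, h14, h13,
    h15.trans or_comm, fun a b hab => (h16 a b hab).symm⟩

lemma IsTwoSumOf.of_iso_left {H₁ : SimpleGraph W₁} (φ : H₁ ≃g G₁)
    (h : IsTwoSumOf G G₁ G₂ j₁ j₂) : IsTwoSumOf G H₁ G₂ j₁ j₂ := by
  obtain ⟨z₁, x₁, y₁, z₂, x₂, y₂, f₁, f₂, h1, h2, h3, h4, h5, h6, h7, h8, h9, h10,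
    h11, h12, h13, h14, h15, h16⟩ := h
  have hne {u : W₁} : u ≠ φ.symm z₁ ↔ φ u ≠ z₁ := φ.eq_symm_apply.not
  have himg : (f₁ ∘ φ) '' {u | u ≠ φ.symm z₁} = f₁ '' {u | u ≠ z₁} := by
    rw [Set.image_comp]
    congr 1
    ext v
    exact ⟨fun ⟨u, hu, hv⟩ => hv ▸ hne.mp hu,
      fun hv => ⟨φ.symm v, by simpa [hne] using hv, by simp⟩⟩
  refine ⟨φ.symm z₁, φ.symm x₁, φ.symm y₁, z₂, x₂, y₂, f₁ ∘ φ, f₂, by simpa using h1, h2,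
    fun u => ?_, h4, h5.comp φ.injective.injOn fun u hu => hne.mp hu, h6, by simpa using h7,
    by simpa using h8, h9, h10, himg ▸ h11, himg ▸ h12, fun u v hu hv huv => ?_, h14,
    by rw [← φ.map_adj_iff]; simpa using h15, himg ▸ h16⟩
  · rw [← φ.map_adj_iff, RelIso.apply_symm_apply, h3, φ.eq_symm_apply, φ.eq_symm_apply]
  · rw [Function.comp_apply, Function.comp_apply, h13 _ _ (hne.mp hu) (hne.mp hv),
      φ.map_adj_iff]
    contrapose! huv
    simpa using congrArg (Sym2.map φ.symm) huv

end TwoSum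

section OptionElim

variable {V : Type*} (U : Set V) (x : V)

lemma image_elim_setOf_ne_none :
    (fun o : Option U => o.elim x Subtype.val) '' {o | o ≠ none} = U := by
  ext v
  constructor
  · rintro ⟨_ | u, hu, rfl⟩
    exacts [absurd rfl hu, u.2]
  · exact fun hv => ⟨some ⟨v, hv⟩, Option.some_ne_none _, rfl⟩

lemma injOn_elim_setOf_ne_none :
    Set.InjOn (fun o : Option U => o.elim x Subtype.val) {o | o ≠ none} := by
  rintro (_ | u) hu (_ | v) hv huv
  exacts [rfl, absurd rfl hu, absurd rfl hv, congrArg some (Subtype.ext huv)]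

end OptionElim

namespace SimpleGraph

section EdgeCount

variable {V : Type*} {G : SimpleGraph V}

lemma Iso.ncard_edgeSet_eq {W : Type*} {G' : SimpleGraph W} (φ : G ≃g G') :
    G.edgeSet.ncard = G'.edgeSet.ncard := by
  rw [← Nat.card_coe_set_eq, ← Nat.card_coe_set_eq]
  exact Nat.card_congr φ.mapEdgeSet

lemma ncard_edgeSet_induce [Finite V] (s : Set V) :
    (G.induce s).edgeSet.ncard = (G.edgeSet ∩ s.sym2).ncard := by
  classical
  have := Fintype.ofFinite V
  have h := congrArg Finset.card (G.map_edgeFinset_induce (s := s))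
  rw [Finset.card_map] at h
  rw [← coe_edgeFinset, Set.ncard_coe_finset, h, ← Set.ncard_coe_finset]
  simp

end EdgeCount

section WithApex

variable {V : Type*} (G : SimpleGraph V)

/-- A part of a 2-sum: `G[U]` plus the vertex `z = none` of degree two, joined to `x` and `y`. -/
def withApex (U : Set V) (x y : V) : SimpleGraph (Option U) where
  Adj
    | some u, some v => G.Adj u v
    | some u, none | none, some u => (u : V) = x ∨ (u : V) = y
    | none, none => False
  symm := ⟨by rintro (_ | u) (_ | v) h <;> first | exact h | exact G.symm.symm _ _ h⟩
  loopless := ⟨by rintro (_ | u) h <;> first | exact h | exact G.irrefl h⟩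

variable {G} {U : Set V} {x y : V}

@[simp] lemma withApex_adj_some_some {u v : U} :
    (G.withApex U x y).Adj (some u) (some v) ↔ G.Adj u v := Iff.rfl

@[simp] lemma withApex_adj_none_some {u : U} :
    (G.withApex U x y).Adj none (some u) ↔ (u : V) = x ∨ (u : V) = y := Iff.rfl

@[simp] lemma withApex_adj_some_none {u : U} :
    (G.withApex U x y).Adj (some u) none ↔ (u : V) = x ∨ (u : V) = y := Iff.rfl

lemma withApex_eq_sup (hx : x ∈ U) (hy : y ∈ U) :
    G.withApex U x y = (G.induce U).map (Function.Embedding.some) ⊔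
      edge none (some ⟨x, hx⟩) ⊔ edge none (some ⟨y, hy⟩) := by
  ext (_ | u) (_ | v) <;> simp [edge_adj, map_adj', Subtype.ext_iff, eq_comm]
  exact Adj.ne

lemma ncard_edgeSet_withApex [Finite V] (hx : x ∈ U) (hy : y ∈ U) (hxy : x ≠ y) :
    (G.withApex U x y).edgeSet.ncard = (G.edgeSet ∩ U.sym2).ncard + 2 := by
  classical
  have := Fintype.ofFinite V
  rw [← ncard_edgeSet_induce, ← coe_edgeFinset, Set.ncard_coe_finset, ← coe_edgeFinset,
    Set.ncard_coe_finset, withApex_eq_sup hx hy, card_edgeFinset_sup_edge,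
    card_edgeFinset_sup_edge, card_edgeFinset_map]
  all_goals simp [edge_adj, map_adj', Subtype.ext_iff, hxy.symm]

end WithApex

variable {V : Type*} {G : SimpleGraph V} {x y : V} {A B : Set V}

structure IsTwoSeparation (G : SimpleGraph V) (x y : V) (A B : Set V) : Prop where
  disjoint : Disjoint A B
  union_eq : A ∪ B = {v | v ≠ x ∧ v ≠ y}
  not_adj : ∀ a ∈ A, ∀ b ∈ B, ¬ G.Adj a b

namespace IsTwoSeparation

lemma symm (hs : G.IsTwoSeparation x y A B) : G.IsTwoSeparation x y B A :=
  ⟨hs.disjoint.symm, Set.union_comm A B ▸ hs.union_eq,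
    fun b hb a ha hba => hs.not_adj a ha b hb hba.symm⟩

lemma swap (hs : G.IsTwoSeparation x y A B) : G.IsTwoSeparation y x A B :=
  ⟨hs.disjoint, by simp only [hs.union_eq, and_comm], hs.not_adj⟩

lemma left_subset (hs : G.IsTwoSeparation x y A B) : A ⊆ {v | v ≠ x ∧ v ≠ y} :=
  hs.union_eq ▸ Set.subset_union_left

lemma right_subset (hs : G.IsTwoSeparation x y A B) : B ⊆ {v | v ≠ x ∧ v ≠ y} :=
  hs.symm.left_subset

lemma notMem_left (hs : G.IsTwoSeparation x y A B) {v : V} (hv : v = x ∨ v = y) : v ∉ A :=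
  fun h => hv.elim (hs.left_subset h).1 (hs.left_subset h).2

lemma notMem_right (hs : G.IsTwoSeparation x y A B) {v : V} (hv : v = x ∨ v = y) : v ∉ B :=
  hs.symm.notMem_left hv

lemma mem_or (hs : G.IsTwoSeparation x y A B) (v : V) : v ∈ A ∨ v ∈ B ∨ v = x ∨ v = y := by
  by_cases hv : v = x ∨ v = y
  · tauto
  · have : v ∈ A ∪ B := hs.union_eq ▸ not_or.mp hv
    exact this.elim .inl (.inr ∘ .inl)

lemma compl_inter_compl (hs : G.IsTwoSeparation x y A B) : Bᶜ ∩ Aᶜ = {x, y} := by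
  ext v
  have := hs.notMem_left (v := v)
  have := hs.notMem_right (v := v)
  have := hs.mem_or v
  simp only [Set.mem_inter_iff, Set.mem_compl_iff, Set.mem_insert_iff, Set.mem_singleton_iff]
  tauto

lemma exists_adj_left (hs : G.IsTwoSeparation x y A B)
    (hconn : (G.induce {v | v ≠ y}).Connected) (hA : A.Nonempty) (hB : B.Nonempty) :
    ∃ a ∈ A, G.Adj x a := by
  obtain ⟨a, ha⟩ := hA
  obtain ⟨b, hb⟩ := hB
  obtain ⟨p⟩ := hconn.preconnected ⟨a, (hs.left_subset ha).2⟩ ⟨b, (hs.right_subset hb).2⟩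
  obtain ⟨d, -, hd₁, hd₂⟩ := p.exists_boundary_dart {v | (v : V) ∈ A} ha
    (Set.disjoint_right.mp hs.disjoint hb)
  refine ⟨d.fst, hd₁, ?_⟩
  -- the dart leaves `A` inside `G - y` without entering `B`, so it ends at `x`
  have hx : (d.snd : V) = x := by
    by_contra hne
    have : (d.snd : V) ∈ A ∪ B := hs.union_eq ▸ ⟨hne, d.snd.2⟩
    exact this.elim hd₂ (hs.not_adj _ hd₁ _ · d.adj)
  exact hx ▸ d.adj.symm

lemma exists_adj (hs : G.IsTwoSeparation x y A B) (hx : (G.induce {v | v ≠ x}).Connected)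
    (hy : (G.induce {v | v ≠ y}).Connected) (hA : A.Nonempty) (hB : B.Nonempty) :
    (∃ a ∈ A, G.Adj x a) ∧ (∃ a ∈ A, G.Adj y a) ∧ (∃ b ∈ B, G.Adj x b) ∧
      (∃ b ∈ B, G.Adj y b) :=
  ⟨hs.exists_adj_left hy hA hB, hs.swap.exists_adj_left hx hA hB,
    hs.symm.exists_adj_left hy hB hA, hs.symm.swap.exists_adj_left hx hB hA⟩

lemma ncard_edgeSet [Finite V] (hs : G.IsTwoSeparation x y A B) : G.edgeSet.ncard =
    (G.edgeSet ∩ Bᶜ.sym2).ncard + ((G.deleteEdges {s(x, y)}).edgeSet ∩ Aᶜ.sym2).ncard := by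
  have hB (b) (hb : b ∈ B) : b ∉ A ∧ b ≠ x ∧ b ≠ y :=
    ⟨Set.disjoint_right.mp hs.disjoint hb, hs.right_subset hb⟩
  have hAB (a b) (ha : a ∈ A) (hb : b ∈ B) : ¬ G.Adj a b ∧ ¬ G.Adj b a :=
    ⟨hs.not_adj a ha b hb, fun h => hs.not_adj a ha b hb h.symm⟩
  have := hs.mem_or
  rw [← Set.ncard_union_eq _ (Set.toFinite _) (Set.toFinite _)]
  · congr 1
    ext ⟨u, v⟩
    simp only [edgeSet_deleteEdges, Set.mem_union, Set.mem_inter_iff, Set.mem_sdiff,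
      Set.mk_mem_sym2_iff, Set.mem_compl_iff, mem_edgeSet, Set.mem_singleton_iff, Sym2.eq_iff]
    grind [Adj.ne]
  · rw [Set.disjoint_left]
    rintro ⟨u, v⟩
    simp only [edgeSet_deleteEdges, Set.mem_inter_iff, Set.mem_sdiff,
      Set.mk_mem_sym2_iff, Set.mem_compl_iff, mem_edgeSet, Set.mem_singleton_iff, Sym2.eq_iff]
    grind [Adj.ne]

lemma isTwoSumOf_withApex (hadj : G.Adj x y) (hs : G.IsTwoSeparation x y A B) :
    IsTwoSumOf G (G.withApex Bᶜ x y) ((G.deleteEdges {s(x, y)}).withApex Aᶜ x y) x y := by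
  have hAB (a b) (ha : a ∈ A) (hb : b ∈ B) : ¬ G.Adj a b ∧ ¬ G.Adj b a :=
    ⟨hs.not_adj a ha b hb, fun h => hs.not_adj a ha b hb h.symm⟩
  have hdisj (v) (hvA : v ∈ A) (hvB : v ∈ B) : False :=
    Set.disjoint_left.mp hs.disjoint hvA hvB
  refine ⟨none, some ⟨x, hs.notMem_right (.inl rfl)⟩, some ⟨y, hs.notMem_right (.inr rfl)⟩,
    none, some ⟨x, hs.notMem_left (.inl rfl)⟩, some ⟨y, hs.notMem_left (.inr rfl)⟩,
    (·.elim x Subtype.val), (·.elim x Subtype.val), by simp [hadj.ne], by simp [hadj.ne],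
    ?_, ?_, injOn_elim_setOf_ne_none _ _, injOn_elim_setOf_ne_none _ _, rfl, rfl, rfl, rfl,
    ?_, ?_, ?_, ?_, by simp [hadj], ?_⟩
  · rintro (_ | u) <;> simp [Subtype.ext_iff]
  · rintro (_ | u) <;> simp [Subtype.ext_iff]
  · simp only [image_elim_setOf_ne_none]
    intro v
    by_contra h
    simp only [Set.mem_union, Set.mem_compl_iff, not_or, not_not] at h
    exact hdisj v h.2 h.1
  · simp only [image_elim_setOf_ne_none, hs.compl_inter_compl]
  · rintro (_ | u) (_ | v) hu hv - <;> simp_all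
  · rintro (_ | u) (_ | v) hu hv huv <;> simp_all [Subtype.ext_iff]
  · simp only [image_elim_setOf_ne_none, Set.mem_compl_iff]
    intro a b hab
    grind

lemma admissibleTwoCut [Finite V] (hadj : G.Adj x y) (hs : G.IsTwoSeparation x y A B)
    (h₁ : 2 < (G.edgeSet ∩ Bᶜ.sym2).ncard)
    (h₂ : 2 < ((G.deleteEdges {s(x, y)}).edgeSet ∩ Aᶜ.sym2).ncard) :
    AdmissibleTwoCut G x y := by
  set G₁ := G.withApex Bᶜ x y
  set G₂ := (G.deleteEdges {s(x, y)}).withApex Aᶜ x y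
  let φ₁ := Iso.comap (Finite.equivFin (Option ↥Bᶜ)).symm G₁
  let φ₂ := Iso.comap (Finite.equivFin (Option ↥Aᶜ)).symm G₂
  have hG₁ : G₁.edgeSet.ncard = (G.edgeSet ∩ Bᶜ.sym2).ncard + 2 :=
    ncard_edgeSet_withApex (hs.notMem_right (.inl rfl)) (hs.notMem_right (.inr rfl)) hadj.ne
  have hG₂ : G₂.edgeSet.ncard = ((G.deleteEdges {s(x, y)}).edgeSet ∩ Aᶜ.sym2).ncard + 2 :=
    ncard_edgeSet_withApex (hs.notMem_left (.inl rfl)) (hs.notMem_left (.inr rfl)) hadj.ne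
  refine ⟨_, _, _, _, (((hs.isTwoSumOf_withApex hadj).of_iso_left φ₁).symm.of_iso_left φ₂).symm,
    ?_, ?_⟩
  · rw [φ₁.ncard_edgeSet_eq, hG₁, hs.ncard_edgeSet]; omega
  · rw [φ₂.ncard_edgeSet_eq, hG₂, hs.ncard_edgeSet]; omega

lemma admissibleTwoCut_of_adj [Finite V] (hadj : G.Adj x y) (hs : G.IsTwoSeparation x y A B)
    (hx : (G.induce {v | v ≠ x}).Connected) (hy : (G.induce {v | v ≠ y}).Connected)
    (hA : A.Nonempty) {u w : V} (hu : u ∈ B) (hw : w ∈ B) (huw : G.Adj u w) :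
    AdmissibleTwoCut G x y := by
  obtain ⟨⟨a, ha, hxa⟩, ⟨a', ha', hya'⟩, ⟨b, hb, hxb⟩, ⟨b', hb', hyb'⟩⟩ :=
    hs.exists_adj hx hy hA ⟨u, hu⟩
  have hAB {v} (hv : v ∈ A) : v ∉ B := Set.disjoint_left.mp hs.disjoint hv
  have hBA {v} (hv : v ∈ B) : v ∉ A := Set.disjoint_right.mp hs.disjoint hv
  have := hs.notMem_left (v := x) (.inl rfl); have := hs.notMem_left (v := y) (.inr rfl)
  have := hs.notMem_right (v := x) (.inl rfl); have := hs.notMem_right (v := y) (.inr rfl)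
  have := hs.left_subset ha; have := hs.left_subset ha'; have := hs.right_subset hb
  have := hs.right_subset hb'; have := hs.right_subset hu; have := hs.right_subset hw
  refine hs.admissibleTwoCut hadj ((Set.two_lt_ncard_iff).mpr ⟨s(x, y), s(x, a), s(y, a'), ?_⟩)
    ((Set.two_lt_ncard_iff).mpr ⟨s(x, b), s(y, b'), s(u, w), ?_⟩)
  · simp_all
    grind [hadj.ne]
  · simp_all [edgeSet_deleteEdges]
    grind [hadj.ne]

end IsTwoSeparation

lemma isTwoSeparation_connectedComponent (G : SimpleGraph V) (x y : V)
    (c : (G.induce {v | v ≠ x ∧ v ≠ y}).ConnectedComponent) :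
    G.IsTwoSeparation x y (Subtype.val '' c.suppᶜ) (Subtype.val '' c.supp) where
  disjoint := (Set.disjoint_image_iff Subtype.val_injective).mpr disjoint_compl_left
  union_eq := by rw [← Set.image_union, Set.compl_union_self, Set.image_univ,
    Subtype.range_coe_subtype, Set.ofPred_mem_eq]
  not_adj := by
    rintro _ ⟨a, ha, rfl⟩ _ ⟨b, hb, rfl⟩ hab
    exact ha ((c.mem_supp_congr_adj hab).mpr hb)

lemma isTwoSeparation_singleton {a b : V} (hab : a ≠ b) (hnab : ¬ G.Adj a b)
    (hW : {v | v ≠ x ∧ v ≠ y} = {a, b}) : G.IsTwoSeparation x y {a} {b} :=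
  ⟨Set.disjoint_singleton.mpr hab, hW ▸ Set.singleton_union, by rintro _ rfl _ rfl; exact hnab⟩

lemma admissibleTwoCut_of_adj_induce [Finite V] (hadj : G.Adj x y)
    (hx : (G.induce {v | v ≠ x}).Connected) (hy : (G.induce {v | v ≠ y}).Connected)
    [Nontrivial (G.induce {v | v ≠ x ∧ v ≠ y}).ConnectedComponent]
    {u w : ↥{v | v ≠ x ∧ v ≠ y}} (huw : (G.induce {v | v ≠ x ∧ v ≠ y}).Adj u w) :
    AdmissibleTwoCut G x y := by
  obtain ⟨c, hc⟩ := exists_ne ((G.induce {v | v ≠ x ∧ v ≠ y}).connectedComponentMk u)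
  obtain ⟨v, rfl⟩ := c.exists_rep
  exact (G.isTwoSeparation_connectedComponent x y _).admissibleTwoCut_of_adj hadj hx hy
    ⟨v, v, hc, rfl⟩ ⟨u, rfl, rfl⟩
    ⟨w, (ConnectedComponent.connectedComponentMk_eq_of_adj huw).symm, rfl⟩ huw

lemma natCard_connectedComponent_bot :
    Nat.card (⊥ : SimpleGraph V).ConnectedComponent = Nat.card V :=
  Nat.card_congr (Equiv.ofBijective _
    ⟨fun _ _ h => reachable_bot.mp (ConnectedComponent.exact h), fun c => c.exists_rep⟩).symm

lemma nonempty_iso_deleteEdges_top_fin_four {a b : V}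
    (hcover : ∀ v, v = a ∨ v = b ∨ v = x ∨ v = y) (hab : a ≠ b) (hnab : ¬ G.Adj a b)
    (hxy : G.Adj x y) (hxa : G.Adj x a) (hxb : G.Adj x b) (hya : G.Adj y a)
    (hyb : G.Adj y b) :
    Nonempty (G ≃g (⊤ : SimpleGraph (Fin 4)).deleteEdges {s(0, 1)}) := by
  have hnba : ¬ G.Adj b a := fun h => hnab h.symm
  have := hxy.ne; have := hxa.ne; have := hxb.ne; have := hya.ne; have := hyb.ne
  let f : Fin 4 → V := ![a, b, x, y]
  have hf : f.Bijective := by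
    refine ⟨fun i j hij => ?_, fun v => ?_⟩
    · fin_cases i <;> fin_cases j <;> simp_all [f, eq_comm]
    · rcases hcover v with rfl | rfl | rfl | rfl
      exacts [⟨0, rfl⟩, ⟨1, rfl⟩, ⟨2, rfl⟩, ⟨3, rfl⟩]
  refine ⟨Iso.symm ⟨Equiv.ofBijective f hf, fun {i j} => ?_⟩⟩
  fin_cases i <;> fin_cases j <;> simp [f, hnab, hxy, hxa, hxb, hya, hyb, hnba, hxy.symm,
    hxa.symm, hxb.symm, hya.symm, hyb.symm]

end SimpleGraph

/-- If `G` is 2-connected, `x, y` are adjacent, `G - {x,y}` has exactly 2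
components, and `{x,y}` is not an admissible 2-cut, then `G ≅ K₄` minus an edge. -/
theorem isoK4MinusEdge_of_not_admissible {V : Type} [Fintype V]
    (G : SimpleGraph V) (x y : V) (hadj : G.Adj x y)
    (h2 : TwoConnected G)
    (hc : Nat.card ((G.induce {v : V | v ≠ x ∧ v ≠ y}).ConnectedComponent) = 2)
    (hna : ¬ AdmissibleTwoCut G x y) :
    Nonempty (G ≃g (⊤ : SimpleGraph (Fin 4)).deleteEdges {s((0 : Fin 4), (1 : Fin 4))}) := by
  obtain ⟨-, hconn⟩ := h2
  set H := G.induce {v : V | v ≠ x ∧ v ≠ y}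
  have : Nontrivial H.ConnectedComponent := Finite.one_lt_card_iff_nontrivial.mp (by omega)
  have hH : H = ⊥ := eq_bot_iff_forall_not_adj.mpr fun u w huw =>
    hna (admissibleTwoCut_of_adj_induce hadj (hconn x) (hconn y) huw)
  rw [hH, natCard_connectedComponent_bot, Nat.card_coe_set_eq, Set.ncard_eq_two] at hc
  obtain ⟨a, b, hab, hW⟩ := hc
  have ha : a ∈ {v : V | v ≠ x ∧ v ≠ y} := hW ▸ Set.mem_insert a {b}
  have hb : b ∈ {v : V | v ≠ x ∧ v ≠ y} := hW ▸ Set.mem_insert_of_mem a rfl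
  have hs : G.IsTwoSeparation x y {a} {b} :=
    isTwoSeparation_singleton hab (eq_bot_iff_forall_not_adj.mp hH ⟨a, ha⟩ ⟨b, hb⟩) hW
  have hadj' := hs.exists_adj (hconn x) (hconn y) (Set.singleton_nonempty a)
    (Set.singleton_nonempty b)
  simp only [Set.mem_singleton_iff, exists_eq_left] at hadj'
  obtain ⟨hxa, hya, hxb, hyb⟩ := hadj'
  exact nonempty_iso_deleteEdges_top_fin_four hs.mem_or hab (hs.not_adj a rfl b rfl) hadj
    hxa hxb hya hyb
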